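/- Let G be a finite group and A, B subgroups of G with G = AB. (Forward direction) If γ is a gamma function on G with B ≤ ker(γ), then γ(ab) = γ(a) for all a ∈ A, b ∈ B, so γ(G) = γ(A); and if moreover A is γ(A)-invariant, then the restriction γ' = γ|_A : A → Aut(G) is a relative gamma function on A, and ker(γ) is invariant under the subgroup { γ'(a)·ι(a) : a ∈ A } of Aut(G), where ι(a) is conjugation x ↦ a⁻¹xa. (Converse) If γ' : A → Aut(G) is a relative gamma function with γ'(A ∩ B) = {1} and B invariant under { γ'(a)·ι(a) : a ∈ A }, then γ(ab) := γ'(a) (for a ∈ A, b ∈ B) is a well-defined gamma function on G, and ker(γ) = ker(γ')·B. -/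

import Mathlib

/- Formalization of results from "Hopf-Galois structures on extensions of degree p²q and
skew braces of order p²q: the cyclic Sylow p-subgroup case" (Campedel, Caranti, Del Corso).

Conventions: the paper composes permutations/automorphisms left-to-right and writes
`x^α` for the action; in Mathlib composition is right-to-left, so the paper's product
`αβ` is rendered as `β * α`, the paper's `x^α` as `α x`, and the paper's conjugate
`α^β = β⁻¹αβ` as `β * α * β⁻¹`. -/

namespace HGS

universe u v

variable {G : Type*} [Group G]

/-- A gamma function (GF) on `G`: a map `γ : G → Aut G` satisfying the gamma functional
equation `γ(g^{γ(h)}·h) = γ(g)γ(h)` (the right-hand side is the paper's product, which in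
Mathlib's composition order reads `γ h * γ g`). -/
def IsGammaFunction (γ : G → MulAut G) : Prop :=
  ∀ g h : G, γ (γ h g * h) = γ h * γ g

/-- The circle operation `g ∘ h = g^{γ(h)} · h` associated to a gamma function. -/
def circ (γ : G → MulAut G) (g h : G) : G := γ h g * h

/-- A relative gamma function (RGF) on a subgroup `A ≤ G` (encoded as a function on all
of `G` whose values outside `A` are irrelevant): `A` is `γ(A)`-invariant and the gamma
functional equation holds on `A`. -/
def IsRGFOn (A : Subgroup G) (γ : G → MulAut G) : Prop :=
  (∀ x ∈ A, ∀ y ∈ A, γ y x ∈ A) ∧ (∀ x ∈ A, ∀ y ∈ A, γ (γ y x * y) = γ y * γ x)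

/-!
A gamma function `γ` satisfies `γ(g ∘ h) = γ(g)γ(h)` for the circle group `(G, ∘)`,
`g ∘ h = γ h g * h`. Hence it is constant on the cosets `g · ker γ`, and `ker γ`, being normal
in `(G, ∘)`, is stable under `x ↦ a⁻¹ * γ a x * a`, which is conjugation by `a` in `(G, ∘)`.
Conversely, the gamma equation of `γ'` on `A` together with `γ'(A ∩ B) = 1` makes
`γ(ab) := γ'(a)` well defined, and since `B` is stable under `γ'(a)ι(a)`, the circle product of
`ab` and `a'b'` is `(a ∘ a') b''` with `b'' ∈ B`.
-/

namespace IsGammaFunction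

variable {γ : G → MulAut G} (hγ : IsGammaFunction γ)
include hγ

theorem apply_one : γ 1 = 1 := by
  have h := hγ 1 1
  simp only [map_one, one_mul] at h
  exact mul_eq_left.mp h.symm

theorem apply_mul_of_eq_one {b : G} (hb : γ b = 1) (g : G) : γ (g * b) = γ g := by
  simpa [hb] using hγ g b

/-- `(γ a)⁻¹ a⁻¹` is the inverse of `a` for the circle operation. -/
theorem apply_circInv (a : G) : γ ((γ a)⁻¹ a⁻¹) = (γ a)⁻¹ := by
  have h := hγ ((γ a)⁻¹ a⁻¹) a
  rw [MulAut.apply_inv_self, inv_mul_cancel, hγ.apply_one] at h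
  exact eq_inv_of_mul_eq_one_right h.symm

-- `a⁻¹ * γ a k * a = ā ∘ (k ∘ a)`, with `ā` the circle inverse of `a`.
theorem apply_inv_mul_apply_mul_eq_one {k : G} (hk : γ k = 1) (a : G) :
    γ (a⁻¹ * γ a k * a) = 1 := by
  have hka : γ (γ a k * a) = γ a := by simpa [hk] using hγ k a
  have h := hγ ((γ a)⁻¹ a⁻¹) (γ a k * a)
  rw [hka, hγ.apply_circInv, mul_inv_cancel, MulAut.apply_inv_self] at h
  rw [mul_assoc]
  exact h

theorem isRGFOn {A : Subgroup G} (hA : ∀ x ∈ A, ∀ y ∈ A, γ y x ∈ A) : IsRGFOn A γ :=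
  ⟨hA, fun x _ y _ => hγ x y⟩

end IsGammaFunction

theorem range_eq_image_of_apply_mul {X : Type*} {A B : Subgroup G}
    (hAB : ∀ g : G, ∃ a ∈ A, ∃ b ∈ B, g = a * b) {f : G → X}
    (hf : ∀ a ∈ A, ∀ b ∈ B, f (a * b) = f a) : Set.range f = f '' A := by
  refine (Set.image_subset_range f A).antisymm' ?_
  rintro _ ⟨g, rfl⟩
  obtain ⟨a, ha, b, hb, rfl⟩ := hAB g
  exact ⟨a, ha, (hf a ha b hb).symm⟩

namespace IsRGFOn

variable {A B : Subgroup G} {γ' : G → MulAut G}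

theorem apply_mul_of_eq_one (hγ' : IsRGFOn A γ') {x c : G} (hx : x ∈ A) (hc : c ∈ A)
    (hc1 : γ' c = 1) : γ' (x * c) = γ' x := by
  simpa [hc1] using hγ'.2 x hx c hc

theorem apply_eq_of_mul_eq_mul (hγ' : IsRGFOn A γ') (hAB1 : ∀ x ∈ A ⊓ B, γ' x = 1)
    {a a' b b' : G} (ha : a ∈ A) (ha' : a' ∈ A) (hb : b ∈ B) (hb' : b' ∈ B)
    (h : a * b = a' * b') : γ' a = γ' a' := by
  have hcA : a'⁻¹ * a ∈ A := mul_mem (inv_mem ha') ha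
  have hcB : a'⁻¹ * a ∈ B := by
    rw [show a'⁻¹ * a = b' * b⁻¹ by
      rw [inv_mul_eq_iff_eq_mul, ← mul_assoc, ← h, mul_inv_cancel_right]]
    exact mul_mem hb' (inv_mem hb)
  have h1 := hγ'.apply_mul_of_eq_one ha' hcA (hAB1 _ ⟨hcA, hcB⟩)
  rwa [mul_inv_cancel_left] at h1

end IsRGFOn

section Lift

variable {A B : Subgroup G} (hAB : ∀ g : G, ∃ a ∈ A, ∃ b ∈ B, g = a * b) (γ' : G → MulAut G)

noncomputable def liftGamma (g : G) : MulAut G := γ' (hAB g).choose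

variable {hAB γ'} (hγ' : IsRGFOn A γ') (hAB1 : ∀ x ∈ A ⊓ B, γ' x = 1)
include hγ' hAB1

theorem liftGamma_mul {a b : G} (ha : a ∈ A) (hb : b ∈ B) :
    liftGamma hAB γ' (a * b) = γ' a := by
  obtain ⟨ha', b', hb', h⟩ := (hAB (a * b)).choose_spec
  exact hγ'.apply_eq_of_mul_eq_mul hAB1 ha' ha hb' hb h.symm

theorem liftGamma_eq_one_iff (g : G) :
    liftGamma hAB γ' g = 1 ↔ ∃ a ∈ A, ∃ b ∈ B, γ' a = 1 ∧ g = a * b := by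
  constructor
  · obtain ⟨ha, b, hb, hg⟩ := (hAB g).choose_spec
    exact fun h1 => ⟨_, ha, b, hb, h1, hg⟩
  · rintro ⟨a, ha, b, hb, h1, rfl⟩
    rw [liftGamma_mul hγ' hAB1 ha hb, h1]

theorem isGammaFunction_liftGamma (hBstable : ∀ b ∈ B, ∀ a ∈ A, a⁻¹ * γ' a b * a ∈ B) :
    IsGammaFunction (liftGamma hAB γ') := by
  intro g h
  obtain ⟨a, ha, b, hb, rfl⟩ := hAB g
  obtain ⟨a', ha', b', hb', rfl⟩ := hAB h
  have hcirc : γ' a' (a * b) * (a' * b') =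
      (γ' a' a * a') * ((a'⁻¹ * γ' a' b * a') * b') := by
    rw [map_mul]; group
  have hA : γ' a' a * a' ∈ A := mul_mem (hγ'.1 a ha a' ha') ha'
  have hB : (a'⁻¹ * γ' a' b * a') * b' ∈ B := mul_mem (hBstable b hb a' ha') hb'
  simp only [liftGamma_mul hγ' hAB1 ha hb, liftGamma_mul hγ' hAB1 ha' hb']
  rw [hcirc, liftGamma_mul hγ' hAB1 hA hB, hγ'.2 a ha a' ha']

end Lift

/-- Here `ι(a)` is the inner automorphism `x ↦ a⁻¹ x a`, so the paper's `γ'(a)ι(a)` applied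
to `x` is `a⁻¹ * (γ' a x) * a`. -/
theorem lifting_and_restriction_general
    {G : Type u} [Group G] (A B : Subgroup G)
    (hAB : ∀ g : G, ∃ a ∈ A, ∃ b ∈ B, g = a * b) :
    -- Forward direction
    (∀ γ : G → MulAut G, IsGammaFunction γ → (∀ b ∈ B, γ b = 1) →
      ((∀ a ∈ A, ∀ b ∈ B, γ (a * b) = γ a) ∧
       Set.range γ = γ '' (A : Set G) ∧
       ((∀ x ∈ A, ∀ y ∈ A, γ y x ∈ A) →
         IsRGFOn A γ ∧
         ∀ k : G, γ k = 1 → ∀ a ∈ A, γ (a⁻¹ * γ a k * a) = 1))) ∧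
    -- Converse direction
    (∀ γ' : G → MulAut G, IsRGFOn A γ' →
      (∀ x ∈ A ⊓ B, γ' x = 1) →
      (∀ b ∈ (B : Subgroup G), ∀ a ∈ A, a⁻¹ * γ' a b * a ∈ B) →
      ∃ γ : G → MulAut G, IsGammaFunction γ ∧
        (∀ a ∈ A, ∀ b ∈ B, γ (a * b) = γ' a) ∧
        (∀ g : G, γ g = 1 ↔ ∃ a ∈ A, ∃ b ∈ B, γ' a = 1 ∧ g = a * b)) := by
  refine ⟨fun γ hγ hB => ?_, fun γ' hγ' hAB1 hBstable => ?_⟩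
  · have hγB : ∀ a ∈ A, ∀ b ∈ B, γ (a * b) = γ a :=
      fun a _ b hb => hγ.apply_mul_of_eq_one (hB b hb) a
    exact ⟨hγB, range_eq_image_of_apply_mul hAB hγB, fun hA =>
      ⟨hγ.isRGFOn hA, fun k hk a _ => hγ.apply_inv_mul_apply_mul_eq_one hk a⟩⟩
  · exact ⟨liftGamma hAB γ', isGammaFunction_liftGamma hγ' hAB1 hBstable,
      fun a ha b hb => liftGamma_mul hγ' hAB1 ha hb, liftGamma_eq_one_iff hγ' hAB1⟩

/-- Proposition `prop:1.4` of the paper: lifting and restriction.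
Here `ι(a)` is the inner automorphism `x ↦ a⁻¹ x a`, so the paper's `γ'(a)ι(a)` applied
to `x` is `a⁻¹ * (γ' a x) * a`. -/
theorem lifting_and_restriction
    {G : Type u} [Group G] [Finite G] (A B : Subgroup G)
    (hAB : ∀ g : G, ∃ a ∈ A, ∃ b ∈ B, g = a * b) :
    -- Forward direction
    (∀ γ : G → MulAut G, IsGammaFunction γ → (∀ b ∈ B, γ b = 1) →
      ((∀ a ∈ A, ∀ b ∈ B, γ (a * b) = γ a) ∧
       Set.range γ = γ '' (A : Set G) ∧
       ((∀ x ∈ A, ∀ y ∈ A, γ y x ∈ A) →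
         IsRGFOn A γ ∧
         ∀ k : G, γ k = 1 → ∀ a ∈ A, γ (a⁻¹ * γ a k * a) = 1))) ∧
    -- Converse direction
    (∀ γ' : G → MulAut G, IsRGFOn A γ' →
      (∀ x ∈ A ⊓ B, γ' x = 1) →
      (∀ b ∈ (B : Subgroup G), ∀ a ∈ A, a⁻¹ * γ' a b * a ∈ B) →
      ∃ γ : G → MulAut G, IsGammaFunction γ ∧
        (∀ a ∈ A, ∀ b ∈ B, γ (a * b) = γ' a) ∧
        (∀ g : G, γ g = 1 ↔ ∃ a ∈ A, ∃ b ∈ B, γ' a = 1 ∧ g = a * b)) :=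
  lifting_and_restriction_general A B hAB

end HGS
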